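/- arXiv:2406.19187 — 5 statements merged into one kernel-verified Lean document; each statement's English description precedes it below -/
import Mathlib

section
/- For the 3×3 Lax matrix L̃(λ) = diag(t₁,t₂,t₃)·λ + L̃⁰ normalized at infinity with the explicit entries given (off-diagonal (1,2) and (1,3) entries equal to 1, diagonal subleading entries t_{∞^(i),1}, entries (2,3) = -p + t₂q + t_{∞^(2),1}, (3,2) = -p + t₃q + t_{∞^(3),1}, and entries (2,1), (3,1) the stated quadratic expressions in p and q), the characteristic polynomial satisfies det(y·I₃ - L̃(λ)) = y³ - P₁(λ)y² + P₂(λ)y - P₃(λ) - (p³ - P₁(q)p² + P₂(q)p - P₃(q)), where P₁, P₂, P₃ are the polynomials in λ (independent of p,q) defined in the paper. -/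
/-!
Expanding `det (y - L) = y³ - tr L · y² + σ₂(L) · y - det L`, the trace and the sum `σ₂` of the
principal `2 × 2` minors of `L̃(λ)` are `P₁(λ)` and `P₂(λ)`: their `(q, p)`-dependence cancels,
using `m₁ + m₂ + m₃ = 0`. Likewise `det L̃(λ) = P₃(λ) + det L̃(0)`, so only the constant
`det L̃(0)` remains. It is fixed by the point `(λ, y) = (q, p)`, which lies on the spectral curve:
the second and third columns of `p • 1 - L̃(q)` coincide.
-/

namespace Gl3Paper

/-- The polynomial `P₁(λ)` of the `𝔤𝔩₃` system. -/
noncomputable def P1 (t1 t2 t3 a1 a2 a3 : ℂ) (l : ℂ) : ℂ :=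
  (t1 + t2 + t3) * l + a1 + a2 + a3

/-- The polynomial `P₂(λ)` of the `𝔤𝔩₃` system. -/
noncomputable def P2 (t1 t2 t3 a1 a2 a3 m1 m2 m3 : ℂ) (l : ℂ) : ℂ :=
  (t1*t2 + t1*t3 + t2*t3) * l^2
    + (t1*(a2 + a3) + t2*(a1 + a3) + t3*(a1 + a2)) * l
    - (t1*m1 + t2*m2 + t3*m3) + a1*a2 + a1*a3 + a2*a3

/-- The polynomial `P₃(λ)` of the `𝔤𝔩₃` system. -/
noncomputable def P3 (t1 t2 t3 a1 a2 a3 m1 m2 m3 : ℂ) (l : ℂ) : ℂ :=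
  t1*t2*t3 * l^3 + (t1*t2*a3 + t1*t3*a2 + t2*t3*a1) * l^2
    + (t1*t2*m3 + t1*t3*m2 + t2*t3*m1 + t1*a2*a3 + t2*a1*a3 + t3*a1*a2) * l

/-- The Lax matrix `L̃(λ)` normalized at infinity, expressed in the
Darboux coordinates `(q,p)` (Theorem `LaxMatrixgl3` of the paper). -/
noncomputable def Ltil (t1 t2 t3 a1 a2 a3 m2 m3 q p : ℂ) (l : ℂ) :
    Matrix (Fin 3) (Fin 3) ℂ :=
  !![t1*l + a1, 1, 1;
     (t1 - t2)/(t2 - t3) *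
       (p^2 - ((t2 + t3)*q + a2 + a3)*p + t2*t3*q^2 + (t2*a3 + t3*a2)*q
         + a2*a3 - m2*(t2 - t3)),
       t2*l + a2, -p + t2*q + a2;
     -((t1 - t3)/(t2 - t3)) *
       (p^2 - ((t2 + t3)*q + a2 + a3)*p + t2*t3*q^2 + (t2*a3 + t3*a2)*q
         + a2*a3 + m3*(t2 - t3)),
       -p + t3*q + a3, t3*l + a3]

end Gl3Paper

namespace Matrix

variable {R : Type*} [CommRing R]

def sumPrincipalMinorsTwo (M : Matrix (Fin 3) (Fin 3) R) : R :=
  M 0 0 * M 1 1 - M 0 1 * M 1 0 + M 0 0 * M 2 2 - M 0 2 * M 2 0 + M 1 1 * M 2 2 - M 1 2 * M 2 1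

theorem det_smul_one_sub_fin_three (M : Matrix (Fin 3) (Fin 3) R) (y : R) :
    det (y • (1 : Matrix (Fin 3) (Fin 3) R) - M)
      = y ^ 3 - trace M * y ^ 2 + sumPrincipalMinorsTwo M * y - det M := by
  simp only [det_fin_three, trace_fin_three, sumPrincipalMinorsTwo, sub_apply, smul_apply,
    one_apply_eq, smul_eq_mul, ne_eq, Fin.reduceEq, not_false_eq_true, one_apply_ne, mul_one,
    mul_zero]
  ring

end Matrix

namespace Gl3Paper

open Matrix

variable {t1 t2 t3 a1 a2 a3 m1 m2 m3 q p : ℂ}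

theorem trace_Ltil (l : ℂ) :
    trace (Ltil t1 t2 t3 a1 a2 a3 m2 m3 q p l) = P1 t1 t2 t3 a1 a2 a3 l := by
  simp only [trace_fin_three, Ltil, P1,
    of_apply, cons_val', cons_val_zero, cons_val_one, cons_val, cons_val_fin_one]
  ring

theorem sumPrincipalMinorsTwo_Ltil (h23 : t2 ≠ t3) (hm : m1 + m2 + m3 = 0) (l : ℂ) :
    sumPrincipalMinorsTwo (Ltil t1 t2 t3 a1 a2 a3 m2 m3 q p l)
      = P2 t1 t2 t3 a1 a2 a3 m1 m2 m3 l := by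
  obtain rfl : m1 = -m2 - m3 := by linear_combination hm
  have h23' : t2 - t3 ≠ 0 := sub_ne_zero.mpr h23
  simp only [sumPrincipalMinorsTwo, Ltil, P2,
    of_apply, cons_val', cons_val_zero, cons_val_one, cons_val, cons_val_fin_one]
  field_simp
  ring

theorem det_Ltil (h23 : t2 ≠ t3) (hm : m1 + m2 + m3 = 0) (l : ℂ) :
    det (Ltil t1 t2 t3 a1 a2 a3 m2 m3 q p l)
      = P3 t1 t2 t3 a1 a2 a3 m1 m2 m3 l + det (Ltil t1 t2 t3 a1 a2 a3 m2 m3 q p 0) := by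
  obtain rfl : m1 = -m2 - m3 := by linear_combination hm
  have h23' : t2 - t3 ≠ 0 := sub_ne_zero.mpr h23
  simp only [det_fin_three, Ltil, P3,
    of_apply, cons_val', cons_val_zero, cons_val_one, cons_val, cons_val_fin_one]
  field_simp
  ring

theorem det_smul_one_sub_Ltil_self :
    det (p • (1 : Matrix (Fin 3) (Fin 3) ℂ) - Ltil t1 t2 t3 a1 a2 a3 m2 m3 q p q) = 0 :=
  det_zero_of_column_eq (i := 1) (j := 2) (by decide) fun k => by
    fin_cases k <;> simp [Ltil, one_apply] <;> ring

theorem charpoly_of_Ltil_general (t1 t2 t3 a1 a2 a3 m1 m2 m3 q p : ℂ)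
    (h23 : t2 ≠ t3)
    (hm : m1 + m2 + m3 = 0) (l y : ℂ) :
    Matrix.det (y • (1 : Matrix (Fin 3) (Fin 3) ℂ) - Ltil t1 t2 t3 a1 a2 a3 m2 m3 q p l)
      = y^3 - P1 t1 t2 t3 a1 a2 a3 l * y^2
        + P2 t1 t2 t3 a1 a2 a3 m1 m2 m3 l * y
        - P3 t1 t2 t3 a1 a2 a3 m1 m2 m3 l
        - (p^3 - P1 t1 t2 t3 a1 a2 a3 q * p^2
            + P2 t1 t2 t3 a1 a2 a3 m1 m2 m3 q * p
            - P3 t1 t2 t3 a1 a2 a3 m1 m2 m3 q) := by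
  have charpoly_eq (l y : ℂ) :
      det (y • (1 : Matrix (Fin 3) (Fin 3) ℂ) - Ltil t1 t2 t3 a1 a2 a3 m2 m3 q p l)
        = y ^ 3 - P1 t1 t2 t3 a1 a2 a3 l * y ^ 2 + P2 t1 t2 t3 a1 a2 a3 m1 m2 m3 l * y
          - P3 t1 t2 t3 a1 a2 a3 m1 m2 m3 l - det (Ltil t1 t2 t3 a1 a2 a3 m2 m3 q p 0) := by
    rw [det_smul_one_sub_fin_three, trace_Ltil, sumPrincipalMinorsTwo_Ltil h23 hm,
      det_Ltil h23 hm]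
    ring
  have hamiltonian := charpoly_eq q p
  rw [det_smul_one_sub_Ltil_self] at hamiltonian
  rw [charpoly_eq]
  linear_combination -hamiltonian

/-- The characteristic polynomial of the normalized `𝔤𝔩₃` Lax matrix:
`det(y·I₃ - L̃(λ)) = y³ - P₁(λ)y² + P₂(λ)y - P₃(λ) - (p³ - P₁(q)p² + P₂(q)p - P₃(q))`. -/
theorem charpoly_of_Ltil (t1 t2 t3 a1 a2 a3 m1 m2 m3 q p : ℂ)
    (h12 : t1 ≠ t2) (h13 : t1 ≠ t3) (h23 : t2 ≠ t3)
    (hm : m1 + m2 + m3 = 0) (l y : ℂ) :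
    Matrix.det (y • (1 : Matrix (Fin 3) (Fin 3) ℂ) - Ltil t1 t2 t3 a1 a2 a3 m2 m3 q p l)
      = y^3 - P1 t1 t2 t3 a1 a2 a3 l * y^2
        + P2 t1 t2 t3 a1 a2 a3 m1 m2 m3 l * y
        - P3 t1 t2 t3 a1 a2 a3 m1 m2 m3 l
        - (p^3 - P1 t1 t2 t3 a1 a2 a3 q * p^2
            + P2 t1 t2 t3 a1 a2 a3 m1 m2 m3 q * p
            - P3 t1 t2 t3 a1 a2 a3 m1 m2 m3 q) :=
  charpoly_of_Ltil_general t1 t2 t3 a1 a2 a3 m1 m2 m3 q p h23 hm l y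

end Gl3Paper
end

section
/- The point (q,p) lies on the spectral curve of L̃: with L̃(λ) the normalized 3×3 Lax matrix, det(p·I₃ - L̃(q)) = 0. -/
namespace Gl3Paper

/-- The Darboux point `(q,p)` lies on the spectral curve of `L̃`:
`det(p·I₃ - L̃(q)) = 0`. -/
theorem darboux_point_on_spectral_curve (t1 t2 t3 a1 a2 a3 m1 m2 m3 q p : ℂ)
    (h12 : t1 ≠ t2) (h13 : t1 ≠ t3) (h23 : t2 ≠ t3)
    (hm : m1 + m2 + m3 = 0) :
    Matrix.det (p • (1 : Matrix (Fin 3) (Fin 3) ℂ) - Ltil t1 t2 t3 a1 a2 a3 m2 m3 q p q)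
      = 0 := by
  have h : (t2 - t3) ≠ 0 := sub_ne_zero.mpr h23
  simp [Ltil, Matrix.det_fin_three, Matrix.sub_apply, Matrix.smul_apply,
    Matrix.one_apply]
  field_simp
  ring

end Gl3Paper
end

section
/- Under the change of variables τ = √2·X̃₁, q̌ = -√2(Q̌ - X̃₁), p̌ = -(1/√2)(P̌ - Q̌ + θ₂/(2(Q̌ - X̃₁))), with monodromy identifications (s_{X₁^(1),0} - s_{X₁^(2),0})² = θ₂² and s_{∞^(1),0} - s_{∞^(2),0} = -θ₂ - 2θ₁, the flow ℏ∂_τ q̌ = -2q̌p̌ - q̌² + τq̌ + θ₂, ℏ∂_τ p̌ = p̌² + 2q̌p̌ - τp̌ + θ₁ + ℏ transforms into the flow ℏ∂_{X̃₁} Q̌ = ∂Ham^{P4}/∂P̌ and ℏ∂_{X̃₁} P̌ = -∂Ham^{P4}/∂Q̌, where Ham^{P4}(Q̌,P̌) = (Q̌-X̃₁)P̌² + ℏP̌ - Q̌³ + X̃₁Q̌² - (s_{∞^(1),0} - s_{∞^(2),0} - ℏ)Q̌ - (s_{X₁^(1),0} - s_{X₁^(2),0})²/(4(Q̌ - X̃₁)).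 -/
/-!
Inverting the change of variables expresses `Q̌` and `P̌` through `q̌(√2·X̃₁)`, `p̌(√2·X̃₁)` and
`X̃₁` itself. The chain rule, including the explicit `X̃₁`-dependence, then gives
`∂_{X̃₁}Q̌ = 1 - q̌'` and `∂_{X̃₁}P̌ = ∂_{X̃₁}Q̌ - 2p̌' + θ₂(∂_{X̃₁}Q̌ - 1)/(2(Q̌ - X̃₁)²)`, and
substituting the reduced flow for `ℏq̌'`, `ℏp̌'` leaves a rational identity in `Q̌, P̌, X̃₁`.
-/

section DualCoordinates

variable {c X : ℂ}

theorem hasDerivAt_dual_position {q Q : ℂ → ℂ} (hc : c ≠ 0) (hq : DifferentiableAt ℂ q (c * X))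
    (hQ : ∀ Y, q (c * Y) = -c * (Q Y - Y)) :
    HasDerivAt Q (1 - deriv q (c * X)) X := by
  have hQ_eq : Q = fun Y => Y - q (c * Y) / c := by
    funext Y
    rw [hQ]
    field_simp
    ring
  have hscaled : HasDerivAt (fun Y => q (c * Y)) (deriv q (c * X) * c) X :=
    hq.hasDerivAt.comp X (by simpa using (hasDerivAt_id X).const_mul c)
  rw [hQ_eq]
  exact ((hasDerivAt_id X).sub (hscaled.div_const c)).congr_deriv (by field_simp)

theorem hasDerivAt_dual_momentum {p Q P : ℂ → ℂ} {θ Q' : ℂ} (hc : c ≠ 0)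
    (hp : DifferentiableAt ℂ p (c * X)) (hQ : HasDerivAt Q Q' X) (hw : Q X - X ≠ 0)
    (hP : ∀ Y, p (c * Y) = -(1 / c) * (P Y - Q Y + θ / (2 * (Q Y - Y)))) :
    HasDerivAt P (Q' - c ^ 2 * deriv p (c * X) + θ * (Q' - 1) / (2 * (Q X - X) ^ 2)) X := by
  have hP_eq : P = fun Y => Q Y - c * p (c * Y) - θ / (2 * (Q Y - Y)) := by
    funext Y
    rw [hP]
    field_simp
    ring
  have hscaled : HasDerivAt (fun Y => p (c * Y)) (deriv p (c * X) * c) X :=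
    hp.hasDerivAt.comp X (by simpa using (hasDerivAt_id X).const_mul c)
  have hden : HasDerivAt (fun Y => 2 * (Q Y - Y)) (2 * (Q' - 1)) X :=
    (hQ.sub (hasDerivAt_id X)).const_mul 2
  rw [hP_eq]
  have hfrac := (hasDerivAt_const X θ).div hden (by simpa using hw)
  exact ((hQ.sub (hscaled.const_mul c)).sub hfrac).congr_deriv (by field_simp; ring)

theorem dual_position_flow {hbar θ₂ Q P q p q' : ℂ} (hc : c ^ 2 = 2) (hw : Q - X ≠ 0)
    (hq : q = -c * (Q - X)) (hp : p = -(1 / c) * (P - Q + θ₂ / (2 * (Q - X))))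
    (hq' : hbar * q' = -2 * q * p - q ^ 2 + c * X * q + θ₂) :
    hbar * (1 - q') = 2 * (Q - X) * P + hbar := by
  have hc0 : c ≠ 0 := by rintro rfl; norm_num at hc
  subst hq hp
  field_simp at hq'
  rw [hc] at hq'
  linear_combination -hq'

theorem dual_momentum_flow {hbar θ₁ θ₂ Q P q p q' p' : ℂ} (hc : c ^ 2 = 2) (hw : Q - X ≠ 0)
    (hq : q = -c * (Q - X)) (hp : p = -(1 / c) * (P - Q + θ₂ / (2 * (Q - X))))
    (hq' : hbar * q' = -2 * q * p - q ^ 2 + c * X * q + θ₂)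
    (hp' : hbar * p' = p ^ 2 + 2 * q * p - c * X * p + θ₁ + hbar) :
    hbar * ((1 - q') - c ^ 2 * p' + θ₂ * ((1 - q') - 1) / (2 * (Q - X) ^ 2))
      = -P ^ 2 + 3 * Q ^ 2 - 2 * X * Q + ((-θ₂ - 2 * θ₁) - hbar)
        - θ₂ ^ 2 / (4 * (Q - X) ^ 2) := by
  have hc0 : c ≠ 0 := by rintro rfl; norm_num at hc
  subst hq hp
  field_simp at hq' hp' ⊢
  rw [hc] at hq' hp' ⊢
  linear_combination (-4 * (2 * (Q - X) ^ 2 + θ₂)) * hq' - 2 * hp'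

end DualCoordinates

theorem dual_reduced_hamiltonian_flow_general
    (hbar θ1 θ2 sX1 sX2 sI1 sI2 : ℂ)
    (hmonoX : (sX1 - sX2) ^ 2 = θ2 ^ 2)
    (hmonoI : sI1 - sI2 = -θ2 - 2 * θ1)
    (qc pc Qc Pc : ℂ → ℂ)
    (hqdiff : Differentiable ℂ qc) (hpdiff : Differentiable ℂ pc)
    (hqne : ∀ τ : ℂ, qc τ ≠ 0)
    (hflowq : ∀ τ : ℂ,
      hbar * deriv qc τ = -2 * qc τ * pc τ - (qc τ)^2 + τ * qc τ + θ2)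
    (hflowp : ∀ τ : ℂ,
      hbar * deriv pc τ = (pc τ)^2 + 2 * qc τ * pc τ - τ * pc τ + θ1 + hbar)
    (hchangeQ : ∀ X : ℂ,
      qc ((Real.sqrt 2 : ℂ) * X) = -(Real.sqrt 2 : ℂ) * (Qc X - X))
    (hchangeP : ∀ X : ℂ,
      pc ((Real.sqrt 2 : ℂ) * X)
        = -(1 / (Real.sqrt 2 : ℂ)) * (Pc X - Qc X + θ2 / (2 * (Qc X - X)))) :
    ∀ X : ℂ,
      hbar * deriv Qc X = 2 * (Qc X - X) * Pc X + hbar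
      ∧ hbar * deriv Pc X
          = -(Pc X)^2 + 3 * (Qc X)^2 - 2 * X * Qc X + ((sI1 - sI2) - hbar)
            - (sX1 - sX2)^2 / (4 * (Qc X - X)^2) := by
  intro X
  set c : ℂ := (Real.sqrt 2 : ℂ)
  have hc : c ^ 2 = 2 := by simp [c, ← Complex.ofReal_pow]
  have hc0 : c ≠ 0 := by rintro h; simp [h] at hc
  have hw : Qc X - X ≠ 0 := fun h => hqne (c * X) (by rw [hchangeQ, h, mul_zero])
  have hQ := hasDerivAt_dual_position hc0 (hqdiff (c * X)) hchangeQ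
  have hP := hasDerivAt_dual_momentum hc0 (hpdiff (c * X)) hQ hw hchangeP
  rw [hQ.deriv, hP.deriv, hmonoX, hmonoI]
  exact ⟨dual_position_flow hc hw (hchangeQ X) (hchangeP X) (hflowq _),
    dual_momentum_flow hc hw (hchangeQ X) (hchangeP X) (hflowq _) (hflowp _)⟩

/-- Under the time-dependent change of variables `τ = √2·X̃₁`,
`q̌ = -√2(Q̌ - X̃₁)`, `p̌ = -(1/√2)(P̌ - Q̌ + θ₂/(2(Q̌ - X̃₁)))`, together with the
monodromy identifications `(s_{X₁⁽¹⁾,0} - s_{X₁⁽²⁾,0})² = θ₂²` and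
`s_{∞⁽¹⁾,0} - s_{∞⁽²⁾,0} = -θ₂ - 2θ₁`, the reduced `𝔤𝔩₃` flow
`ℏ∂_τ q̌ = -2q̌p̌ - q̌² + τq̌ + θ₂`, `ℏ∂_τ p̌ = p̌² + 2q̌p̌ - τp̌ + θ₁ + ℏ`
transforms into the Hamiltonian flow of the Painlevé 4 Hamiltonian
`Ham^{P4}(Q̌,P̌) = (Q̌-X̃₁)P̌² + ℏP̌ - Q̌³ + X̃₁Q̌²
  - (s_{∞⁽¹⁾,0} - s_{∞⁽²⁾,0} - ℏ)Q̌ - (s_{X₁⁽¹⁾,0} - s_{X₁⁽²⁾,0})²/(4(Q̌ - X̃₁))`,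
i.e. `ℏ∂_{X̃₁}Q̌ = ∂Ham^{P4}/∂P̌` and `ℏ∂_{X̃₁}P̌ = -∂Ham^{P4}/∂Q̌`. -/
theorem dual_reduced_hamiltonian_flow
    (hbar θ1 θ2 sX1 sX2 sI1 sI2 : ℂ)
    (hmonoX : (sX1 - sX2) ^ 2 = θ2 ^ 2)
    (hmonoI : sI1 - sI2 = -θ2 - 2 * θ1)
    (qc pc Qc Pc : ℂ → ℂ)
    (hqdiff : Differentiable ℂ qc) (hpdiff : Differentiable ℂ pc)
    (hQdiff : Differentiable ℂ Qc) (hPdiff : Differentiable ℂ Pc)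
    (hqne : ∀ τ : ℂ, qc τ ≠ 0)
    (hflowq : ∀ τ : ℂ,
      hbar * deriv qc τ = -2 * qc τ * pc τ - (qc τ)^2 + τ * qc τ + θ2)
    (hflowp : ∀ τ : ℂ,
      hbar * deriv pc τ = (pc τ)^2 + 2 * qc τ * pc τ - τ * pc τ + θ1 + hbar)
    (hchangeQ : ∀ X : ℂ,
      qc ((Real.sqrt 2 : ℂ) * X) = -(Real.sqrt 2 : ℂ) * (Qc X - X))
    (hchangeP : ∀ X : ℂ,
      pc ((Real.sqrt 2 : ℂ) * X)
        = -(1 / (Real.sqrt 2 : ℂ)) * (Pc X - Qc X + θ2 / (2 * (Qc X - X)))) :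
    ∀ X : ℂ,
      hbar * deriv Qc X = 2 * (Qc X - X) * Pc X + hbar
      ∧ hbar * deriv Pc X
          = -(Pc X)^2 + 3 * (Qc X)^2 - 2 * X * Qc X + ((sI1 - sI2) - hbar)
            - (sX1 - sX2)^2 / (4 * (Qc X - X)^2) :=
  dual_reduced_hamiltonian_flow_general hbar θ1 θ2 sX1 sX2 sI1 sI2 hmonoX hmonoI qc pc Qc Pc hqdiff
    hpdiff hqne hflowq hflowp hchangeQ hchangeP
end

section
/- For the 2×2 Painlevé 4 Lax matrix L̃_{P4}(ξ), the characteristic polynomial satisfies det(Y·I₂ - L̃_{P4}(ξ)) = Y² - R₁(ξ)Y + R₂(ξ) - ((Q-X₁)/(ξ-X₁))·(P² - R₁(Q)P + R₂(Q)), and in particular the point (Q,P) lies on this spectral curve only after including the apparent-singularity correction term; evaluating the curve expression at (ξ,Y)=(Q,P) gives the value (P² - R₁(Q)P + R₂(Q))·(1 - (Q-X₁)/(Q-X₁)) = 0. -/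
namespace Gl2Paper

/-- `R₁(ξ)` for the Painlevé 4 system. -/
noncomputable def R1 (s12 s22 s11 s21 sx1 sx2 X1 : ℂ) (x : ℂ) : ℂ :=
  (sx1 + sx2) / (x - X1) - (s12 + s22) * x - s11 - s21

/-- `R₂(ξ)` for the Painlevé 4 system. -/
noncomputable def R2 (s12 s22 s11 s21 s10 s20 sx1 sx2 X1 : ℂ) (x : ℂ) : ℂ :=
  sx1 * sx2 / (x - X1)^2 + s12 * s22 * x^2 + (s22 * s11 + s12 * s21) * x
    + s10 * s22 + s11 * s21 + s12 * s20

/-- The `𝔤𝔩₂` Painlevé 4 Lax matrix `L̃_{P4}(ξ)` in the geometric gauge,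
in terms of the Darboux coordinates `(Q,P)`. -/
noncomputable def LP4 (s12 s22 s11 s21 s10 sx1 sx2 X1 Q P : ℂ) (x : ℂ) :
    Matrix (Fin 2) (Fin 2) ℂ :=
  !![(Q - X1) * (s12*Q + P + s11) / (x - X1) - s12*x - s11,
     1 + (X1 - Q) / (x - X1);
     (1 / ((Q - X1) * (x - X1)))
         * (s12*Q^2 + (s11 + P - X1*s12)*Q - (P + s11)*X1 - sx1)
         * (s12*Q^2 + (s11 + P - X1*s12)*Q - (P + s11)*X1 - sx2)
       + (s12 - s22)*(Q - X1)*P + (s12 - s22)*s12*Q^2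
       - (s12 - s22)*(s12*X1 - s11)*Q - (s11*X1 - s10)*(s12 - s22),
     (-s12*Q^2 + (s12*X1 - P - s11)*Q + (s11 + P)*X1 + sx1 + sx2) / (x - X1)
       - s22*x - s21]

/-! For a 2×2 matrix, `det (Y • 1 - L) = Y² - (tr L) Y + det L`. The residues at `ξ = X₁` of the
two diagonal entries of `L̃_{P4}` add up to `sx1 + sx2`, so `tr L̃_{P4} = R₁` identically. The
determinant is matched with `R₂(ξ) - (Q - X₁)/(ξ - X₁) · (P² - R₁(Q) P + R₂(Q))` by clearing
denominators, after eliminating `s20` (on which `L̃_{P4}` does not depend) from `R₂` by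
`s10 + s20 + sx1 + sx2 = 0`. -/

theorem _root_.Matrix.det_smul_one_sub_fin_two {R : Type*} [CommRing R] (M : Matrix (Fin 2) (Fin 2) R)
    (Y : R) : (Y • (1 : Matrix (Fin 2) (Fin 2) R) - M).det = Y ^ 2 - M.trace * Y + M.det := by
  rw [Matrix.det_fin_two, Matrix.trace_fin_two, Matrix.det_fin_two]
  simp only [Matrix.sub_apply, Matrix.smul_apply, Matrix.one_apply_eq,
    Matrix.one_apply_ne (by decide : (0 : Fin 2) ≠ 1), Matrix.one_apply_ne (by decide : (1 : Fin 2) ≠ 0),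
    smul_eq_mul, mul_one, mul_zero]
  ring

theorem trace_LP4 (s12 s22 s11 s21 s10 sx1 sx2 X1 Q P x : ℂ) :
    (LP4 s12 s22 s11 s21 s10 sx1 sx2 X1 Q P x).trace = R1 s12 s22 s11 s21 sx1 sx2 X1 x := by
  simp only [Matrix.trace_fin_two, LP4, R1, Matrix.of_apply, Matrix.cons_val', Matrix.cons_val_zero,
    Matrix.cons_val_one, Matrix.empty_val', Matrix.cons_val_fin_one]
  ring

theorem det_LP4 {s12 s22 s11 s21 s10 s20 sx1 sx2 X1 Q P x : ℂ}
    (hmono : s10 + s20 + sx1 + sx2 = 0) (hQ : Q ≠ X1) (hx : x ≠ X1) :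
    (LP4 s12 s22 s11 s21 s10 sx1 sx2 X1 Q P x).det
      = R2 s12 s22 s11 s21 s10 s20 sx1 sx2 X1 x
        - (Q - X1) / (x - X1) * (P ^ 2 - R1 s12 s22 s11 s21 sx1 sx2 X1 Q * P
          + R2 s12 s22 s11 s21 s10 s20 sx1 sx2 X1 Q) := by
  obtain rfl : s20 = -s10 - sx1 - sx2 := by linear_combination hmono
  simp only [Matrix.det_fin_two, LP4, R1, R2, Matrix.of_apply, Matrix.cons_val', Matrix.cons_val_zero,
    Matrix.cons_val_one, Matrix.empty_val', Matrix.cons_val_fin_one]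
  have hQ' : Q - X1 ≠ 0 := sub_ne_zero.mpr hQ
  have hx' : x - X1 ≠ 0 := sub_ne_zero.mpr hx
  field_simp
  ring

theorem charpoly_of_LP4_general (s12 s22 s11 s21 s10 s20 sx1 sx2 X1 Q P : ℂ)
    (hmono : s10 + s20 + sx1 + sx2 = 0)
    (hQ : Q ≠ X1) (x Y : ℂ) (hx : x ≠ X1) :
    Matrix.det (Y • (1 : Matrix (Fin 2) (Fin 2) ℂ)
        - LP4 s12 s22 s11 s21 s10 sx1 sx2 X1 Q P x)
      = Y^2 - R1 s12 s22 s11 s21 sx1 sx2 X1 x * Y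
        + R2 s12 s22 s11 s21 s10 s20 sx1 sx2 X1 x
        - ((Q - X1) / (x - X1))
            * (P^2 - R1 s12 s22 s11 s21 sx1 sx2 X1 Q * P
                + R2 s12 s22 s11 s21 s10 s20 sx1 sx2 X1 Q)
    ∧ (P^2 - R1 s12 s22 s11 s21 sx1 sx2 X1 Q * P
        + R2 s12 s22 s11 s21 s10 s20 sx1 sx2 X1 Q) * (1 - (Q - X1)/(Q - X1)) = 0 := by
  refine ⟨?_, by rw [div_self (sub_ne_zero.mpr hQ), sub_self, mul_zero]⟩
  rw [Matrix.det_smul_one_sub_fin_two, trace_LP4, det_LP4 hmono hQ hx]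
  ring

/-- The characteristic polynomial of the Painlevé 4 Lax matrix:
`det(Y·I₂ - L̃_{P4}(ξ)) = Y² - R₁(ξ)Y + R₂(ξ) - ((Q-X₁)/(ξ-X₁))(P² - R₁(Q)P + R₂(Q))`;
moreover evaluating the curve's apparent-singularity correction at `(ξ,Y) = (Q,P)`
gives `(P² - R₁(Q)P + R₂(Q))·(1 - (Q-X₁)/(Q-X₁)) = 0`. -/
theorem charpoly_of_LP4 (s12 s22 s11 s21 s10 s20 sx1 sx2 X1 Q P : ℂ)
    (hs : s12 ≠ s22) (hmono : s10 + s20 + sx1 + sx2 = 0)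
    (hQ : Q ≠ X1) (x Y : ℂ) (hx : x ≠ X1) :
    Matrix.det (Y • (1 : Matrix (Fin 2) (Fin 2) ℂ)
        - LP4 s12 s22 s11 s21 s10 sx1 sx2 X1 Q P x)
      = Y^2 - R1 s12 s22 s11 s21 sx1 sx2 X1 x * Y
        + R2 s12 s22 s11 s21 s10 s20 sx1 sx2 X1 x
        - ((Q - X1) / (x - X1))
            * (P^2 - R1 s12 s22 s11 s21 sx1 sx2 X1 Q * P
                + R2 s12 s22 s11 s21 s10 s20 sx1 sx2 X1 Q)
    ∧ (P^2 - R1 s12 s22 s11 s21 sx1 sx2 X1 Q * P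
        + R2 s12 s22 s11 s21 s10 s20 sx1 sx2 X1 Q) * (1 - (Q - X1)/(Q - X1)) = 0 :=
  charpoly_of_LP4_general s12 s22 s11 s21 s10 s20 sx1 sx2 X1 Q P hmono hQ x Y hx

end Gl2Paper
end

section
/- The Painlevé 4 Lax pair in the canonical gauge satisfies the zero-curvature equation: ℏ∂_σ L̃₀^{P4}(ξ) = ℏ∂_ξ Ã₀^{P4}(ξ) + [Ã₀^{P4}(ξ), L̃₀^{P4}(ξ)], given that (Q̌,P̌) evolve by the Hamiltonian flow of Ham^{P4}(Q̌,P̌) = (Q̌-σ)P̌² + ℏP̌ - Q̌³ + σQ̌² - (θ_a - ℏ)Q̌ - θ_b²/(4(Q̌-σ)). -/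
namespace P4Canonical

/-- The Painlevé 4 Lax matrix `L̃₀^{P4}(ξ)` in the canonical gauge, with
`θ_a = s_{∞⁽¹⁾,0} - s_{∞⁽²⁾,0}`, `θ_b = s_{X₁⁽¹⁾,0} - s_{X₁⁽²⁾,0}`,
`θ_c = s_{X₁⁽¹⁾,0} + s_{X₁⁽²⁾,0}`. -/
noncomputable def L0P4 (θa θb θc : ℂ) (Q P σ x : ℂ) : Matrix (Fin 2) (Fin 2) ℂ :=
  !![-x - σ + (Q*(P + Q - σ) - σ*P + θc/2)/x,
     1 + (σ - Q)/x;
     2*(Q - σ)*(Q + P) + θa + ((Q + P)^2*(Q - σ) - θb^2/(4*(Q - σ)))/x,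
     x + σ + (-(Q*(P + Q - σ)) + σ*P + θc/2)/x]

/-- The Painlevé 4 deformation matrix `Ã₀^{P4}(ξ)` in the canonical gauge. -/
noncomputable def A0P4 (θa : ℂ) (Q P σ x : ℂ) : Matrix (Fin 2) (Fin 2) ℂ :=
  !![-x - Q, 1;
     2*(Q - σ)*(P + Q) + θa, x + Q]

/-!
Both sides are explicit rational functions of `Q̌, P̌, σ, ξ`. Differentiating `L̃₀` entrywise along
the curve expresses `ℏ ∂_σ L̃₀` linearly in `ℏ Q̌'` and `ℏ P̌'`; substituting the Hamiltonian
equations, each entry of the zero-curvature equation becomes an identity of rational functions.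
-/

/-- The σ-derivative of `L0P4 θa θb θc (Q s) (P s) s x` along a curve with velocities `dQ`, `dP`. -/
noncomputable def L0P4Dot (θb Q P σ x dQ dP : ℂ) : Matrix (Fin 2) (Fin 2) ℂ :=
  !![-1 + ((dQ - 1)*(Q + P) + (Q - σ)*(dQ + dP))/x,
     -(dQ - 1)/x;
     2*((dQ - 1)*(Q + P) + (Q - σ)*(dQ + dP))
       + ((dQ - 1)*(Q + P)^2 + 2*(Q - σ)*(Q + P)*(dQ + dP) + θb^2*(dQ - 1)/(4*(Q - σ)^2))/x,
     1 - ((dQ - 1)*(Q + P) + (Q - σ)*(dQ + dP))/x]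

lemma hasDerivAt_L0P4_apply {Q P : ℂ → ℂ} {dQ dP σ : ℂ} (θa θb θc x : ℂ)
    (hQ : HasDerivAt Q dQ σ) (hP : HasDerivAt P dP σ) (hne : Q σ ≠ σ) (i j : Fin 2) :
    HasDerivAt (fun s => L0P4 θa θb θc (Q s) (P s) s x i j)
      (L0P4Dot θb (Q σ) (P σ) σ x dQ dP i j) σ := by
  have hu : HasDerivAt (fun s => Q s - s) (dQ - 1) σ := hQ.sub (hasDerivAt_id σ)
  have hw : HasDerivAt (fun s => Q s + P s) (dQ + dP) σ := hQ.add hP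
  -- the combination `Q(P + Q - σ) - σP` occurring in `L0P4` factors as `(Q - σ)(Q + P)`
  have huw : HasDerivAt (fun s => (Q s - s) * (Q s + P s))
      ((dQ - 1) * (Q σ + P σ) + (Q σ - σ) * (dQ + dP)) σ := hu.mul hw
  fin_cases i <;> fin_cases j <;> simp only [L0P4, L0P4Dot, Fin.zero_eta, Fin.mk_one,
    Matrix.of_apply, Matrix.cons_val', Matrix.cons_val_zero, Matrix.cons_val_one,
    Matrix.empty_val', Matrix.cons_val_fin_one]
  · refine (((hasDerivAt_const σ (-x)).sub (hasDerivAt_id' σ)).add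
      ((huw.add_const (θc / 2)).div_const x)).congr_deriv (by ring)
      |>.congr_of_eventuallyEq (.of_forall fun s => ?_)
    simp only [Pi.add_apply, Pi.sub_apply]; ring
  · refine ((hasDerivAt_const σ 1).sub (hu.div_const x)).congr_deriv (by ring)
      |>.congr_of_eventuallyEq (.of_forall fun s => ?_)
    simp only [Pi.sub_apply]; ring
  · have hu_ne : 4 * (Q σ - σ) ≠ 0 := mul_ne_zero (by norm_num) (sub_ne_zero.mpr hne)
    have hinv := (hasDerivAt_const σ (θb ^ 2)).div (hu.const_mul 4) hu_ne
    refine ((huw.const_mul 2).add_const θa).add (((hw.mul huw).sub hinv).div_const x)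
      |>.congr_deriv (by field_simp; ring) |>.congr_of_eventuallyEq (.of_forall fun s => ?_)
    simp only [Pi.add_apply, Pi.sub_apply, Pi.mul_apply, Pi.div_apply]; ring
  · refine (((hasDerivAt_const σ x).add (hasDerivAt_id' σ)).add
      ((huw.neg.add_const (θc / 2)).div_const x)).congr_deriv (by ring)
      |>.congr_of_eventuallyEq (.of_forall fun s => ?_)
    simp only [Pi.add_apply, Pi.neg_apply]; ring

lemma hasDerivAt_A0P4_apply (θa Q P σ x : ℂ) (i j : Fin 2) :
    HasDerivAt (fun ξ => A0P4 θa Q P σ ξ i j) (!![-1, 0; 0, 1] i j) x := by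
  fin_cases i <;> fin_cases j <;> simp only [A0P4, Fin.zero_eta, Fin.mk_one,
    Matrix.of_apply, Matrix.cons_val', Matrix.cons_val_zero, Matrix.cons_val_one,
    Matrix.empty_val', Matrix.cons_val_fin_one]
  · simpa using (hasDerivAt_id x).neg.sub_const Q
  · exact hasDerivAt_const x 1
  · exact hasDerivAt_const x _
  · exact (hasDerivAt_id x).add_const Q

lemma smul_L0P4Dot_eq_add_commutator {θa θb θc hbar Q P σ x dQ dP : ℂ} (hne : Q ≠ σ) (hx : x ≠ 0)
    (hflowQ : hbar * dQ = 2*(Q - σ)*P + hbar)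
    (hflowP : hbar * dP = -P^2 + 3*Q^2 - 2*σ*Q + (θa - hbar) - θb^2/(4*(Q - σ)^2)) :
    hbar • L0P4Dot θb Q P σ x dQ dP
      = hbar • !![-1, 0; 0, 1]
        + (A0P4 θa Q P σ x * L0P4 θa θb θc Q P σ x - L0P4 θa θb θc Q P σ x * A0P4 θa Q P σ x) := by
  have hu : Q - σ ≠ 0 := sub_ne_zero.mpr hne
  ext i j
  fin_cases i <;> fin_cases j <;> simp only [L0P4, A0P4, L0P4Dot, Matrix.smul_apply,
    Matrix.add_apply, Matrix.sub_apply, Matrix.mul_apply, Fin.sum_univ_two, Matrix.of_apply,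
    Matrix.cons_val', Matrix.cons_val_zero, Matrix.cons_val_one, Matrix.empty_val',
    Matrix.cons_val_fin_one, smul_eq_mul, Fin.zero_eta, Fin.mk_one]
  · linear_combination (norm := (field_simp; ring))
      ((P + 2*Q - σ)/x) * hflowQ + ((Q - σ)/x) * hflowP
  · linear_combination (norm := (field_simp; ring)) (-1/x) * hflowQ
  · linear_combination (norm := (field_simp; ring))
      (2*(Q + P) + 2*(Q - σ) + ((Q + P)^2 + 2*(Q - σ)*(Q + P) + θb^2/(4*(Q - σ)^2))/x) * hflowQ
        + (2*(Q - σ) + 2*(Q - σ)*(Q + P)/x) * hflowP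
  · linear_combination (norm := (field_simp; ring))
      (-(P + 2*Q - σ)/x) * hflowQ - ((Q - σ)/x) * hflowP

/-- Given that `(Q̌,P̌)` evolve by the Hamiltonian flow of
`Ham^{P4}(Q̌,P̌) = (Q̌-σ)P̌² + ℏP̌ - Q̌³ + σQ̌² - (θ_a-ℏ)Q̌ - θ_b²/(4(Q̌-σ))`,
i.e. `ℏ∂_σ Q̌ = 2(Q̌-σ)P̌ + ℏ` and `ℏ∂_σ P̌ = -∂Ham^{P4}/∂Q̌`, the canonical
Painlevé 4 Lax pair satisfies the zero-curvature equation
`ℏ∂_σ L̃₀^{P4}(ξ) = ℏ∂_ξ Ã₀^{P4}(ξ) + [Ã₀^{P4}(ξ), L̃₀^{P4}(ξ)]` for `ξ ≠ 0`. -/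
theorem zero_curvature_P4
    (θa θb θc hbar : ℂ) (Qc Pc : ℂ → ℂ)
    (hQ : Differentiable ℂ Qc) (hP : Differentiable ℂ Pc)
    (hne : ∀ σ : ℂ, Qc σ ≠ σ)
    (hflowQ : ∀ σ : ℂ, hbar * deriv Qc σ = 2*(Qc σ - σ)*Pc σ + hbar)
    (hflowP : ∀ σ : ℂ,
      hbar * deriv Pc σ
        = -(Pc σ)^2 + 3*(Qc σ)^2 - 2*σ*(Qc σ) + (θa - hbar)
          - θb^2/(4*(Qc σ - σ)^2)) :
    ∀ σ x : ℂ, x ≠ 0 →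
      hbar • Matrix.of (fun i j : Fin 2 =>
          deriv (fun s => L0P4 θa θb θc (Qc s) (Pc s) s x i j) σ)
        = hbar • Matrix.of (fun i j : Fin 2 =>
            deriv (fun ξ => A0P4 θa (Qc σ) (Pc σ) σ ξ i j) x)
          + (A0P4 θa (Qc σ) (Pc σ) σ x * L0P4 θa θb θc (Qc σ) (Pc σ) σ x
             - L0P4 θa θb θc (Qc σ) (Pc σ) σ x * A0P4 θa (Qc σ) (Pc σ) σ x) := by
  intro σ x hx
  have hL : Matrix.of (fun i j : Fin 2 =>
      deriv (fun s => L0P4 θa θb θc (Qc s) (Pc s) s x i j) σ)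
        = L0P4Dot θb (Qc σ) (Pc σ) σ x (deriv Qc σ) (deriv Pc σ) := by
    ext i j
    exact (hasDerivAt_L0P4_apply θa θb θc x (hQ σ).hasDerivAt (hP σ).hasDerivAt (hne σ) i j).deriv
  have hA : Matrix.of (fun i j : Fin 2 => deriv (fun ξ => A0P4 θa (Qc σ) (Pc σ) σ ξ i j) x)
      = !![-1, 0; 0, 1] := by
    ext i j
    exact (hasDerivAt_A0P4_apply θa (Qc σ) (Pc σ) σ x i j).deriv
  rw [hL, hA]
  exact smul_L0P4Dot_eq_add_commutator (hne σ) hx (hflowQ σ) (hflowP σ)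

end P4Canonical
end
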